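/- arXiv:1409.0835 — 8 statements merged into one kernel-verified Lean document; each statement's English description precedes it below -/
import Mathlib

section
/- Let σ > 0 and ε > 0, and let H(σ,ε) be the 2×2 real matrix with first row (−ε·c·σ + ρ̄ − 1, Ā) and second row ((2ρ̄F₂/F₁)σ − λ₀ρ̄, −σ − λ₀Ā). Then H(σ,ε), viewed as a complex matrix, has an eigenvalue with strictly positive real part if and only if ε < ((2B̄F₂/F₁ + ρ̄ − 1)σ − λ₀Ā) / (c(σ + λ₀Ā)σ). -/
/-!
An eigenvalue of a real 2×2 matrix is a root of `μ² - (tr M) μ + det M`. When the trace is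
nonpositive, a root with positive real part cannot be non-real (its real part would be
`tr M / 2 ≤ 0`), so it is a positive real root, which exists exactly when `det M < 0`.
For `H(σ, ε)` the trace is negative because `ρ̄ < 1`, and, using `Ā ρ̄ = B̄`, the determinant is
`ε c (σ + λ₀ Ā) σ - ((2 B̄ F₂ / F₁ + ρ̄ - 1) σ - λ₀ Ā)`.
-/

open Polynomial

theorem Complex.exists_quadratic_root_re_pos_iff {T D : ℝ} (hT : T ≤ 0) :
    (∃ μ : ℂ, 0 < μ.re ∧ μ ^ 2 - T * μ + D = 0) ↔ D < 0 := by
  constructor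
  · rintro ⟨μ, hre, hroot⟩
    have hroot_re : μ.re ^ 2 - μ.im ^ 2 - T * μ.re + D = 0 := by
      simpa [pow_two] using congrArg re hroot
    have hroot_im : μ.im * (2 * μ.re - T) = 0 := by
      have := congrArg im hroot
      simp only [pow_two, add_im, sub_im, mul_im, ofReal_re, ofReal_im, zero_mul, add_zero,
        zero_im] at this
      linear_combination this
    have him : μ.im = 0 := (mul_eq_zero.mp hroot_im).resolve_right (by linarith)
    rw [him] at hroot_re
    nlinarith
  · intro hD
    set s := √(T ^ 2 - 4 * D)
    have hs : s ^ 2 = T ^ 2 - 4 * D := Real.sq_sqrt (by nlinarith)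
    have hTs : -T < s := by nlinarith [Real.sqrt_nonneg (T ^ 2 - 4 * D)]
    refine ⟨((T + s) / 2 : ℝ), by simp; linarith, ?_⟩
    have : ((T + s) / 2) ^ 2 - T * ((T + s) / 2) + D = 0 := by linear_combination hs / 4
    exact_mod_cast this

namespace Matrix

theorem exists_mulVec_eq_smul_iff_isRoot_charpoly {n K : Type*} [Fintype n] [DecidableEq n]
    [Field K] (M : Matrix n n K) (μ : K) :
    (∃ v ≠ 0, M *ᵥ v = μ • v) ↔ M.charpoly.IsRoot μ := by
  rw [IsRoot.def, eval_charpoly, ← exists_mulVec_eq_zero_iff]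
  simp only [scalar_apply, ← smul_one_eq_diagonal, sub_mulVec, smul_mulVec, one_mulVec,
    sub_eq_zero, eq_comm]

theorem isRoot_charpoly_fin_two {K : Type*} [Field K] (M : Matrix (Fin 2) (Fin 2) K) (μ : K) :
    M.charpoly.IsRoot μ ↔ μ ^ 2 - M.trace * μ + M.det = 0 := by
  simp [charpoly_fin_two]

theorem exists_eigenvalue_re_pos_map_ofReal_iff (M : Matrix (Fin 2) (Fin 2) ℝ)
    (hM : M.trace ≤ 0) :
    (∃ μ : ℂ, 0 < μ.re ∧ ∃ v ≠ 0, (M.map ((↑) : ℝ → ℂ)) *ᵥ v = μ • v) ↔ M.det < 0 := by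
  have htrace : (M.map ((↑) : ℝ → ℂ)).trace = M.trace :=
    (AddMonoidHom.map_trace Complex.ofRealHom M).symm
  have hdet : (M.map ((↑) : ℝ → ℂ)).det = M.det := (Complex.ofRealHom.map_det M).symm
  simp only [exists_mulVec_eq_smul_iff_isRoot_charpoly, isRoot_charpoly_fin_two, htrace, hdet]
  exact Complex.exists_quadratic_root_re_pos_iff hM

end Matrix

theorem departure_mode_instability_iff_general
    (A0 Bbar lam0 h1 h2 F1 F2 Abar ρbar c σ ε : ℝ)
    (hA0 : 0 < A0) (hB : 0 < Bbar) (hlam : 0 < lam0)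
    (hh1 : 0 < h1) (hh2 : 0 < h2)
    (hAbar : Abar = A0 + Bbar) (hρbar : ρbar = Bbar / (A0 + Bbar))
    (hc : c = h1 + h2 * Bbar)
    (hσ : 0 < σ) (hε : 0 < ε) :
    (∃ μ : ℂ, 0 < μ.re ∧ ∃ v : Fin 2 → ℂ, v ≠ 0 ∧
      ((!![-ε * c * σ + ρbar - 1, Abar;
           (2 * ρbar * F2 / F1) * σ - lam0 * ρbar, -σ - lam0 * Abar]).map
        (fun x : ℝ => (x : ℂ))).mulVec v = μ • v) ↔
    ε < ((2 * Bbar * F2 / F1 + ρbar - 1) * σ - lam0 * Abar) /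
        (c * (σ + lam0 * Abar) * σ) := by
  have hApos : 0 < Abar := by rw [hAbar]; positivity
  have hAρ : Abar * ρbar = Bbar := by rw [hAbar, hρbar]; field_simp
  have hρ : ρbar < 1 := by rw [hρbar, div_lt_one (by positivity)]; linarith
  have hcpos : 0 < c := by rw [hc]; positivity
  have htrace : -ε * c * σ + ρbar - 1 + (-σ - lam0 * Abar) ≤ 0 := by
    nlinarith [mul_pos (mul_pos hε hcpos) hσ, mul_pos hlam hApos]
  have hdet : (-ε * c * σ + ρbar - 1) * (-σ - lam0 * Abar)
      - Abar * ((2 * ρbar * F2 / F1) * σ - lam0 * ρbar)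
      = ε * (c * (σ + lam0 * Abar) * σ)
        - ((2 * Bbar * F2 / F1 + ρbar - 1) * σ - lam0 * Abar) := by
    linear_combination (-(2 * F2 / F1 * σ)) * hAρ
  rw [Matrix.exists_eigenvalue_re_pos_map_ofReal_iff _ (by rwa [Matrix.trace_fin_two_of]),
    Matrix.det_fin_two_of, hdet, sub_neg, lt_div_iff₀ (by positivity)]

/-- Per-mode instability criterion for the departure-dependent urban crime model
(Proposition 3.1). -/
theorem departure_mode_instability_iff
    (A0 Bbar lam0 h1 h2 F1 F2 Abar ρbar c σ ε : ℝ)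
    (hA0 : 0 < A0) (hB : 0 < Bbar) (hlam : 0 < lam0)
    (hh1 : 0 < h1) (hh2 : 0 < h2) (hF1 : 0 < F1) (hF2 : 0 ≤ F2)
    (hAbar : Abar = A0 + Bbar) (hρbar : ρbar = Bbar / (A0 + Bbar))
    (hc : c = h1 + h2 * Bbar)
    (hσ : 0 < σ) (hε : 0 < ε) :
    (∃ μ : ℂ, 0 < μ.re ∧ ∃ v : Fin 2 → ℂ, v ≠ 0 ∧
      ((!![-ε * c * σ + ρbar - 1, Abar;
           (2 * ρbar * F2 / F1) * σ - lam0 * ρbar, -σ - lam0 * Abar]).map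
        (fun x : ℝ => (x : ℂ))).mulVec v = μ • v) ↔
    ε < ((2 * Bbar * F2 / F1 + ρbar - 1) * σ - lam0 * Abar) /
        (c * (σ + lam0 * Abar) * σ) :=
  departure_mode_instability_iff_general A0 Bbar lam0 h1 h2 F1 F2 Abar ρbar c σ ε hA0 hB hlam hh1
    hh2 hAbar hρbar hc hσ hε
end

section
/- Let σ > 0 and ε > 0, and let H(σ,ε) be the 2×2 real matrix with first row (−ε·c̃·σ + ρ̄ − 1, Ā) and second row ((2ρ̄F₂/F₁)σ − λ₀ρ̄, −σ − λ₀Ā), where c̃ = h₁ − h₂B̄ and it is assumed that c̃ > 0. Then H(σ,ε), viewed as a complex matrix, has an eigenvalue with strictly positive real part if and only if ε < ((2B̄F₂/F₁ + ρ̄ − 1)σ − λ₀Ā) / (c̃(σ + λ₀Ā)σ). -/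
/-- Roots of a monic real quadratic with negative linear trace:
a root with positive real part exists iff the constant term is negative. -/
lemma quad_pos_root_iff (T D : ℝ) (hT : T < 0) :
    (∃ μ : ℂ, 0 < μ.re ∧ μ ^ 2 - (T : ℂ) * μ + (D : ℂ) = 0) ↔ D < 0 := by
  constructor
  · rintro ⟨μ, hre, heq⟩
    rw [Complex.ext_iff] at heq
    simp [pow_two, Complex.mul_re, Complex.mul_im] at heq
    obtain ⟨h1, h2⟩ := heq
    have hy : μ.im = 0 := by
      rcases mul_eq_zero.1 (show μ.im * (2 * μ.re - T) = 0 by ring_nf; ring_nf at h2; linarith) with h | h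
      · exact h
      · nlinarith
    nlinarith [sq_nonneg μ.re]
  · intro hD
    have hdisc : (0:ℝ) ≤ T ^ 2 - 4 * D := by nlinarith
    set s := Real.sqrt (T ^ 2 - 4 * D) with hs
    have hs2 : s ^ 2 = T ^ 2 - 4 * D := Real.sq_sqrt hdisc
    have hsnn : 0 ≤ s := Real.sqrt_nonneg _
    have hsT : -T < s := by nlinarith
    refine ⟨(((T + s) / 2 : ℝ) : ℂ), ?_, ?_⟩
    · simp only [Complex.ofReal_re]
      linarith
    · have hre : ((T + s) / 2) ^ 2 - T * ((T + s) / 2) + D = 0 := by nlinarith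
      exact_mod_cast congrArg (fun x : ℝ => (x : ℂ)) hre

/-- Eigenvector existence for a 2×2 complex matrix ↔ root of the characteristic
quadratic. -/
lemma eig_iff_quad (a b c d : ℂ) (μ : ℂ) :
    (∃ v : Fin 2 → ℂ, v ≠ 0 ∧ (!![a, b; c, d]).mulVec v = μ • v) ↔
    μ ^ 2 - (a + d) * μ + (a * d - b * c) = 0 := by
  have key : ∀ v : Fin 2 → ℂ,
      (!![a, b; c, d]).mulVec v = μ • v ↔
      (!![a, b; c, d] - μ • 1).mulVec v = 0 := by
    intro v
    rw [Matrix.sub_mulVec, Matrix.smul_mulVec, Matrix.one_mulVec, sub_eq_zero]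
  have h1 : (∃ v : Fin 2 → ℂ, v ≠ 0 ∧ (!![a, b; c, d]).mulVec v = μ • v) ↔
      (!![a, b; c, d] - μ • 1).det = 0 := by
    rw [← Matrix.exists_mulVec_eq_zero_iff]
    constructor
    · rintro ⟨v, hv, h⟩; exact ⟨v, hv, (key v).1 h⟩
    · rintro ⟨v, hv, h⟩; exact ⟨v, hv, (key v).2 h⟩
  rw [h1]
  have hdet : (!![a, b; c, d] - μ • 1).det = μ ^ 2 - (a + d) * μ + (a * d - b * c) := by
    simp [Matrix.det_fin_two, Matrix.one_apply]
    ring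
  rw [hdet]

/-- For a real 2×2 matrix with negative trace, an eigenvalue with positive
real part exists iff the determinant is negative. -/
lemma real_mat_pos_eig_iff (a b c d : ℝ) (hT : a + d < 0) :
    (∃ μ : ℂ, 0 < μ.re ∧ ∃ v : Fin 2 → ℂ, v ≠ 0 ∧
      ((!![a, b; c, d]).map (fun x : ℝ => (x : ℂ))).mulVec v = μ • v) ↔
    a * d - b * c < 0 := by
  have hmap : (!![a, b; c, d]).map (fun x : ℝ => (x : ℂ)) =
      !![(a:ℂ), (b:ℂ); (c:ℂ), (d:ℂ)] := by
    ext i j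
    fin_cases i <;> fin_cases j <;> simp
  rw [← quad_pos_root_iff (a + d) (a * d - b * c) hT]
  constructor
  · rintro ⟨μ, hre, hv⟩
    rw [hmap] at hv
    refine ⟨μ, hre, ?_⟩
    have := (eig_iff_quad (a:ℂ) b c d μ).1 hv
    convert this using 2 <;> push_cast <;> ring
  · rintro ⟨μ, hre, heq⟩
    refine ⟨μ, hre, ?_⟩
    rw [hmap]
    apply (eig_iff_quad (a:ℂ) b c d μ).2
    convert heq using 2 <;> push_cast <;> ring

/-- Per-mode instability criterion for the arrival-dependent urban crime model
(Corollary 3.1). -/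
theorem arrival_mode_instability_iff
    (A0 Bbar lam0 h1 h2 F1 F2 Abar ρbar ctilde σ ε : ℝ)
    (hA0 : 0 < A0) (hB : 0 < Bbar) (hlam : 0 < lam0)
    (hh1 : 0 < h1) (hh2 : 0 < h2) (hF1 : 0 < F1) (hF2 : 0 ≤ F2)
    (hAbar : Abar = A0 + Bbar) (hρbar : ρbar = Bbar / (A0 + Bbar))
    (hctilde : ctilde = h1 - h2 * Bbar) (hcpos : 0 < ctilde)
    (hσ : 0 < σ) (hε : 0 < ε) :
    (∃ μ : ℂ, 0 < μ.re ∧ ∃ v : Fin 2 → ℂ, v ≠ 0 ∧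
      ((!![-ε * ctilde * σ + ρbar - 1, Abar;
           (2 * ρbar * F2 / F1) * σ - lam0 * ρbar, -σ - lam0 * Abar]).map
        (fun x : ℝ => (x : ℂ))).mulVec v = μ • v) ↔
    ε < ((2 * Bbar * F2 / F1 + ρbar - 1) * σ - lam0 * Abar) /
        (ctilde * (σ + lam0 * Abar) * σ) := by
  have hAB : 0 < A0 + Bbar := by linarith
  have hρlt : ρbar < 1 := by
    rw [hρbar, div_lt_one hAB]; linarith
  have hρpos : 0 < ρbar := by
    rw [hρbar]; positivity
  have hAbarpos : 0 < Abar := by rw [hAbar]; linarith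
  have hT : (-ε * ctilde * σ + ρbar - 1) + (-σ - lam0 * Abar) < 0 := by
    have : 0 < ε * ctilde * σ := by positivity
    nlinarith
  rw [real_mat_pos_eig_iff _ _ _ _ hT]
  have hK : 0 < ctilde * (σ + lam0 * Abar) * σ := by positivity
  rw [lt_div_iff₀ hK]
  have key : (-ε * ctilde * σ + ρbar - 1) * (-σ - lam0 * Abar) -
      Abar * ((2 * ρbar * F2 / F1) * σ - lam0 * ρbar) =
      ε * (ctilde * (σ + lam0 * Abar) * σ) -
      ((2 * Bbar * F2 / F1 + ρbar - 1) * σ - lam0 * Abar) := by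
    rw [hAbar, hρbar]
    field_simp
    ring
  rw [key]
  constructor <;> intro h <;> linarith
end

section
/- Let σ > 0 and let M(σ,ε) be the 2×2 real matrix with first row (−ε·c·σ + ρ̄ − 1, Ā) and second row ((2ρ̄F₂/F₁)σ − λ₀ρ̄, −σ − λ₀Ā). Then for every real ε, det M(σ,ε) = 0 if and only if ε = ε̄(σ), where ε̄(σ) = ((2B̄F₂/F₁ + ρ̄ − 1)σ − λ₀Ā) / (c(σ + λ₀Ā)σ). -/
/-- The linearization matrix at the eigenmode σ is singular iff ε equals the
bifurcation value ε̄(σ) (equation (4.7)). -/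
theorem det_eq_zero_iff_bifurcation_value
    (A0 Bbar lam0 h1 h2 F1 F2 Abar ρbar c σ : ℝ)
    (hA0 : 0 < A0) (hB : 0 < Bbar) (hlam : 0 < lam0)
    (hh1 : 0 < h1) (hh2 : 0 < h2) (hF1 : 0 < F1) (hF2 : 0 ≤ F2)
    (hAbar : Abar = A0 + Bbar) (hρbar : ρbar = Bbar / (A0 + Bbar))
    (hc : c = h1 + h2 * Bbar)
    (hσ : 0 < σ) :
    ∀ ε : ℝ,
      (!![-ε * c * σ + ρbar - 1, Abar;
          (2 * ρbar * F2 / F1) * σ - lam0 * ρbar, -σ - lam0 * Abar]).det = 0 ↔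
      ε = ((2 * Bbar * F2 / F1 + ρbar - 1) * σ - lam0 * Abar) /
          (c * (σ + lam0 * Abar) * σ) := by
  intro ε
  have hcpos : 0 < c := by
    rw [hc]; positivity
  have hApos : 0 < Abar := by rw [hAbar]; positivity
  have hden : 0 < σ + lam0 * Abar := by positivity
  have hK : c * (σ + lam0 * Abar) * σ ≠ 0 := by positivity
  have hAB : 0 < A0 + Bbar := by positivity
  have hkey : (!![-ε * c * σ + ρbar - 1, Abar;
          (2 * ρbar * F2 / F1) * σ - lam0 * ρbar, -σ - lam0 * Abar]).det
      = c * (σ + lam0 * Abar) * σ * ε -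
        ((2 * Bbar * F2 / F1 + ρbar - 1) * σ - lam0 * Abar) := by
    rw [Matrix.det_fin_two_of]
    subst hAbar hρbar
    field_simp
    ring
  rw [hkey, sub_eq_zero, eq_div_iff hK]
  constructor <;> intro h <;> linarith
end

section
/- Let σ > 0 and assume (2ρ̄F₂/F₁)σ − λ₀ρ̄ ≠ 0, and set Q = (σ + λ₀Ā)/((2ρ̄F₂/F₁)σ − λ₀ρ̄). Let M be the 2×2 real matrix with first row (−ε̄(σ)·c·σ + ρ̄ − 1, Ā) and second row ((2ρ̄F₂/F₁)σ − λ₀ρ̄, −σ − λ₀Ā), where ε̄(σ) = ((2B̄F₂/F₁ + ρ̄ − 1)σ − λ₀Ā)/(c(σ + λ₀Ā)σ). Then the null space of the linear map on ℝ² induced by M is exactly the one-dimensional span of the vector (Q, 1). -/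
/-- At the bifurcation value ε̄(σ), the kernel of the linearization matrix is
spanned by the vector (Q, 1) (equations (4.8)-(4.9)). -/
theorem kernel_eq_span_Q_one
    (A0 Bbar lam0 h1 h2 F1 F2 Abar ρbar c σ Q : ℝ)
    (hA0 : 0 < A0) (hB : 0 < Bbar) (hlam : 0 < lam0)
    (hh1 : 0 < h1) (hh2 : 0 < h2) (hF1 : 0 < F1) (hF2 : 0 ≤ F2)
    (hAbar : Abar = A0 + Bbar) (hρbar : ρbar = Bbar / (A0 + Bbar))
    (hc : c = h1 + h2 * Bbar)
    (hσ : 0 < σ)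
    (hden : (2 * ρbar * F2 / F1) * σ - lam0 * ρbar ≠ 0)
    (hQ : Q = (σ + lam0 * Abar) / ((2 * ρbar * F2 / F1) * σ - lam0 * ρbar)) :
    LinearMap.ker
      (Matrix.mulVecLin
        (!![-(((2 * Bbar * F2 / F1 + ρbar - 1) * σ - lam0 * Abar) /
              (c * (σ + lam0 * Abar) * σ)) * c * σ + ρbar - 1, Abar;
            (2 * ρbar * F2 / F1) * σ - lam0 * ρbar, -σ - lam0 * Abar])) =
    Submodule.span ℝ {![Q, 1]} := by
  have hAb : (0:ℝ) < Abar := by rw [hAbar]; linarith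
  have hS : (0:ℝ) < σ + lam0 * Abar := by positivity
  have hS0 : σ + lam0 * Abar ≠ 0 := ne_of_gt hS
  have hc0 : c ≠ 0 := by rw [hc]; positivity
  have hσ0 : σ ≠ 0 := ne_of_gt hσ
  have hF10 : F1 ≠ 0 := ne_of_gt hF1
  have hAB0 : A0 + Bbar ≠ 0 := by positivity
  have hρA : ρbar * Abar = Bbar := by rw [hρbar, hAbar]; field_simp
  have main : -((2 * Bbar * F2 / F1 + ρbar - 1) * σ - lam0 * Abar)
      + (ρbar - 1) * (σ + lam0 * Abar)
      + Abar * ((2 * ρbar * F2 / F1) * σ - lam0 * ρbar) = 0 := by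
    linear_combination (2 * F2 * σ / F1) * hρA
  have hdQ : ((2 * ρbar * F2 / F1) * σ - lam0 * ρbar) * Q = σ + lam0 * Abar := by
    rw [hQ, mul_comm, div_mul_cancel₀ _ hden]
  have hSdiv : ((2 * Bbar * F2 / F1 + ρbar - 1) * σ - lam0 * Abar) / (σ + lam0 * Abar)
      * (σ + lam0 * Abar) = (2 * Bbar * F2 / F1 + ρbar - 1) * σ - lam0 * Abar :=
    div_mul_cancel₀ _ hS0
  have e1 : -(((2 * Bbar * F2 / F1 + ρbar - 1) * σ - lam0 * Abar) /
      (c * (σ + lam0 * Abar) * σ)) * c * σ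
      = -(((2 * Bbar * F2 / F1 + ρbar - 1) * σ - lam0 * Abar) / (σ + lam0 * Abar)) := by
    field_simp
  have key' : ((-(((2 * Bbar * F2 / F1 + ρbar - 1) * σ - lam0 * Abar) / (σ + lam0 * Abar))
      + ρbar - 1) * Q + Abar * 1) * ((2 * ρbar * F2 / F1) * σ - lam0 * ρbar) = 0 := by
    linear_combination
      (-(((2 * Bbar * F2 / F1 + ρbar - 1) * σ - lam0 * Abar) / (σ + lam0 * Abar))
        + ρbar - 1) * hdQ + main - hSdiv
  have key : (-(((2 * Bbar * F2 / F1 + ρbar - 1) * σ - lam0 * Abar) /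
        (c * (σ + lam0 * Abar) * σ)) * c * σ + ρbar - 1) * Q + Abar * 1 = 0 := by
    rw [e1]
    rcases mul_eq_zero.mp key' with h | h
    · exact h
    · exact absurd h hden
  ext v
  simp only [LinearMap.mem_ker, Matrix.mulVecLin_apply, Submodule.mem_span_singleton]
  constructor
  · intro hv
    have h1v := congrFun hv 1
    simp [Matrix.mulVec, dotProduct, Fin.sum_univ_two] at h1v
    refine ⟨v 1, ?_⟩
    have hv0 : v 0 = Q * v 1 := by
      rw [hQ, div_mul_eq_mul_div, eq_div_iff hden]
      linear_combination h1v
    funext i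
    fin_cases i <;> simp [hv0, mul_comm]
  · rintro ⟨a, rfl⟩
    funext i
    fin_cases i
    · simp [Matrix.mulVec, dotProduct, Fin.sum_univ_two]
      linear_combination a * key
    · simp [Matrix.mulVec, dotProduct, Fin.sum_univ_two]
      linear_combination a * hdQ
end

section
/- Let σ > 0, assume (2ρ̄F₂/F₁)σ − λ₀ρ̄ ≠ 0, and set Q = (σ + λ₀Ā)/((2ρ̄F₂/F₁)σ − λ₀ρ̄) (note Q ≠ 0 since σ + λ₀Ā > 0). Let M be the 2×2 real matrix with first row (−ε̄(σ)·c·σ + ρ̄ − 1, Ā) and second row ((2ρ̄F₂/F₁)σ − λ₀ρ̄, −σ − λ₀Ā), where ε̄(σ) = ((2B̄F₂/F₁ + ρ̄ − 1)σ − λ₀Ā)/(c(σ + λ₀Ā)σ). Then the vector (−c·σ·Q, 0) does NOT lie in the range of the linear map on ℝ² induced by M. -/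
/-- Transversality condition (proof of Theorem 4.1): the vector (−cσQ, 0) does
not lie in the range of the singular linearization matrix at ε̄(σ). -/
theorem transversality_not_mem_range
    (A0 Bbar lam0 h1 h2 F1 F2 Abar ρbar c σ Q : ℝ)
    (hA0 : 0 < A0) (hB : 0 < Bbar) (hlam : 0 < lam0)
    (hh1 : 0 < h1) (hh2 : 0 < h2) (hF1 : 0 < F1) (hF2 : 0 ≤ F2)
    (hAbar : Abar = A0 + Bbar) (hρbar : ρbar = Bbar / (A0 + Bbar))
    (hc : c = h1 + h2 * Bbar)
    (hσ : 0 < σ)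
    (hden : (2 * ρbar * F2 / F1) * σ - lam0 * ρbar ≠ 0)
    (hQ : Q = (σ + lam0 * Abar) / ((2 * ρbar * F2 / F1) * σ - lam0 * ρbar)) :
    ![-(c * σ * Q), 0] ∉
      LinearMap.range
        (Matrix.mulVecLin
          (!![-(((2 * Bbar * F2 / F1 + ρbar - 1) * σ - lam0 * Abar) /
                (c * (σ + lam0 * Abar) * σ)) * c * σ + ρbar - 1, Abar;
              (2 * ρbar * F2 / F1) * σ - lam0 * ρbar, -σ - lam0 * Abar])) := by
  rintro ⟨v, hv⟩
  have hAbar_pos : 0 < Abar := by rw [hAbar]; linarith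
  have hD : 0 < σ + lam0 * Abar := by positivity
  have hc0 : 0 < c := by rw [hc]; positivity
  have hQ0 : Q ≠ 0 := by
    rw [hQ]; exact div_ne_zero (ne_of_gt hD) hden
  have h0 := congrFun hv 0
  have h1 := congrFun hv 1
  simp [Matrix.mulVecLin, Matrix.mulVec, dotProduct, Fin.sum_univ_two] at h0 h1
  set L := (2 * ρbar * F2 / F1) * σ - lam0 * ρbar with hL
  have hρ : ρbar * Abar = Bbar := by
    rw [hρbar, hAbar]; field_simp
  -- key identity: a * D = -Abar * L
  have hkey : (-(((2 * Bbar * F2 / F1 + ρbar - 1) * σ - lam0 * Abar) /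
      (c * (σ + lam0 * Abar) * σ) * c * σ) + ρbar - 1) * (σ + lam0 * Abar)
      = -Abar * L := by
    rw [hL, show Bbar = ρbar * Abar from hρ.symm]
    field_simp
    ring
  -- from h1 : L * v 0 = (σ + lam0 * Abar) * v 1
  have h1' : L * v 0 = (σ + lam0 * Abar) * v 1 := by linarith
  -- multiply h0 by D:
  have h0' : ((-(((2 * Bbar * F2 / F1 + ρbar - 1) * σ - lam0 * Abar) /
      (c * (σ + lam0 * Abar) * σ) * c * σ) + ρbar - 1) * v 0 + Abar * v 1)
      * (σ + lam0 * Abar) = -(c * σ * Q) * (σ + lam0 * Abar) := by rw [h0]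
  have : (0:ℝ) = -(c * σ * Q) * (σ + lam0 * Abar) := by
    rw [← h0']
    linear_combination (-(v 0)) * hkey + Abar * h1'
  have hne : -(c * σ * Q) * (σ + lam0 * Abar) ≠ 0 := by
    apply mul_ne_zero _ (ne_of_gt hD)
    simp only [neg_ne_zero]
    exact mul_ne_zero (mul_ne_zero (ne_of_gt hc0) (ne_of_gt hσ)) hQ0
  exact hne this.symm
end

section
/- Let L > 0, let σ be a real number, and let Φ : ℝ → ℝ be twice continuously differentiable with Φ''(x) = −σΦ(x) for all x ∈ [0, L] and Φ'(0) = Φ'(L) = 0. Then ∫₀^L (Φ'(x))⁴ dx = σ²·∫₀^L Φ(x)⁴ dx. -/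
/-!
Along a solution of `Φ'' = -σ Φ`, the function `Φ Φ'³ + σ Φ³ Φ'` has derivative `Φ'⁴ - σ² Φ⁴`
(the cross terms `∓ 3σ Φ² Φ'²` cancel). The Neumann conditions kill it at both ends, so the
fundamental theorem of calculus gives the identity.
-/

open Set intervalIntegral

section

variable {f g : ℝ → ℝ} {σ : ℝ}

theorem hasDerivAt_mul_pow_three_add_pow_three_mul {x : ℝ} (hf : HasDerivAt f (g x) x)
    (hg : HasDerivAt g (-σ * f x) x) :
    HasDerivAt (fun y => f y * g y ^ 3 + σ * f y ^ 3 * g y) (g x ^ 4 - σ ^ 2 * f x ^ 4) x := by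
  refine ((hf.mul (hg.pow 3)).add (((hf.pow 3).const_mul σ).mul hg)).congr_deriv ?_
  simp only [Pi.pow_apply]
  ring

theorem integral_pow_four_sub_eq {a b : ℝ} (hf : ∀ x ∈ uIcc a b, HasDerivAt f (g x) x)
    (hg : ∀ x ∈ uIcc a b, HasDerivAt g (-σ * f x) x) :
    ∫ x in a..b, (g x ^ 4 - σ ^ 2 * f x ^ 4) =
      (f b * g b ^ 3 + σ * f b ^ 3 * g b) - (f a * g a ^ 3 + σ * f a ^ 3 * g a) := by
  have hfc : ContinuousOn f (uIcc a b) := HasDerivAt.continuousOn hf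
  have hgc : ContinuousOn g (uIcc a b) := HasDerivAt.continuousOn hg
  exact integral_eq_sub_of_hasDerivAt
    (fun x hx => hasDerivAt_mul_pow_three_add_pow_three_mul (hf x hx) (hg x hx))
    (((hgc.pow 4).sub (continuousOn_const.mul (hfc.pow 4))).intervalIntegrable)

theorem integral_pow_four_eq_of_neumann {a b : ℝ} (hf : ∀ x ∈ uIcc a b, HasDerivAt f (g x) x)
    (hg : ∀ x ∈ uIcc a b, HasDerivAt g (-σ * f x) x) (ha : g a = 0) (hb : g b = 0) :
    ∫ x in a..b, g x ^ 4 = σ ^ 2 * ∫ x in a..b, f x ^ 4 := by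
  have hfc : ContinuousOn f (uIcc a b) := HasDerivAt.continuousOn hf
  have hgc : ContinuousOn g (uIcc a b) := HasDerivAt.continuousOn hg
  have hftc := integral_pow_four_sub_eq hf hg
  have hg4 : IntervalIntegrable (fun x => g x ^ 4) MeasureTheory.volume a b :=
    (hgc.pow 4).intervalIntegrable
  have hf4 : IntervalIntegrable (fun x => σ ^ 2 * f x ^ 4) MeasureTheory.volume a b :=
    (continuousOn_const.mul (hfc.pow 4)).intervalIntegrable
  rw [ha, hb, integral_sub hg4 hf4, integral_const_mul] at hftc
  linarith

end

/-- Integral identity (5.24): for a Neumann eigenfunction Φ on [0,L] with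
eigenvalue σ, ∫₀^L (Φ')⁴ dx = σ² ∫₀^L Φ⁴ dx. -/
theorem integral_grad_pow_four (L σ : ℝ) (hL : 0 < L) (Φ : ℝ → ℝ)
    (hΦ : ContDiff ℝ 2 Φ)
    (heig : ∀ x ∈ Set.Icc (0 : ℝ) L, deriv (deriv Φ) x = -σ * Φ x)
    (hbc0 : deriv Φ 0 = 0) (hbcL : deriv Φ L = 0) :
    ∫ x in (0 : ℝ)..L, (deriv Φ x) ^ 4 =
      σ ^ 2 * ∫ x in (0 : ℝ)..L, (Φ x) ^ 4 := by
  have hΦ' : ContDiff ℝ 1 (deriv Φ) := hΦ.iterate_deriv' 1 1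
  refine integral_pow_four_eq_of_neumann (fun x _ => ?_) (fun x hx => ?_) hbc0 hbcL
  · exact (hΦ.differentiable (by norm_num) x).hasDerivAt
  · rw [← heig x (uIcc_of_le hL.le ▸ hx)]
    exact (hΦ'.differentiable one_ne_zero x).hasDerivAt
end

section
/- Let L > 0, let σ be a real number, and let Φ : ℝ → ℝ be twice continuously differentiable with Φ''(x) = −σΦ(x) for all x ∈ [0, L] and Φ'(0) = Φ'(L) = 0. Then ∫₀^L (Φ'(x))²·(d²/dx²)(Φ(x)²) dx = 2σ²·∫₀^L Φ(x)⁴ dx − 2σ·∫₀^L Φ(x)²(Φ'(x))² dx. -/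
/-!
Since `(Φ²)'' = 2Φ'² + 2ΦΦ'' = 2Φ'² - 2σΦ²`, the claim reduces to `∫ Φ'⁴ = σ² ∫ Φ⁴`.
Both sides are linked by integrating `(Φ^(m+1) Φ'^(n+1))'` over `[0, L]`: the Neumann
condition kills the boundary term, and the eigenvalue equation turns the integrand into
`(m+1) Φ^m Φ'^(n+2) - (n+1) σ Φ^(m+2) Φ'^n`. The cases `(m, n) = (0, 2)` and `(2, 0)` give
`∫ Φ'⁴ = 3σ ∫ Φ²Φ'²` and `3 ∫ Φ²Φ'² = σ ∫ Φ⁴`.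
-/

open intervalIntegral Set
open MeasureTheory (volume)

section

variable {Φ : ℝ → ℝ}

theorem deriv_deriv_sq {x : ℝ} (hΦ : Differentiable ℝ Φ)
    (hΦ' : DifferentiableAt ℝ (deriv Φ) x) :
    deriv (deriv fun y => Φ y ^ 2) x = 2 * deriv Φ x ^ 2 + 2 * Φ x * deriv (deriv Φ) x := by
  have hsq : (deriv fun y => Φ y ^ 2) = fun y => 2 * (Φ y * deriv Φ y) := by
    funext y
    rw [((hΦ y).hasDerivAt.fun_pow 2).deriv]
    ring
  rw [hsq, (((hΦ x).hasDerivAt.fun_mul hΦ'.hasDerivAt).const_mul 2).deriv]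
  ring

theorem integral_pow_mul_deriv_pow_of_neumann {σ a b : ℝ} (hΦ : ContDiff ℝ 2 Φ) (hab : a ≤ b)
    (heig : ∀ x ∈ Icc a b, deriv (deriv Φ) x = -σ * Φ x)
    (ha : deriv Φ a = 0) (hb : deriv Φ b = 0) (m n : ℕ) :
    (m + 1) * ∫ x in a..b, Φ x ^ m * deriv Φ x ^ (n + 2) =
      (n + 1) * σ * ∫ x in a..b, Φ x ^ (m + 2) * deriv Φ x ^ n := by
  have hΦd : Differentiable ℝ Φ := hΦ.differentiable two_ne_zero
  have hcΦ' : Continuous (deriv Φ) := hΦ.continuous_deriv one_le_two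
  have hderiv : ∀ x ∈ uIcc a b, HasDerivAt (fun y => Φ y ^ (m + 1) * deriv Φ y ^ (n + 1))
      ((m + 1) * (Φ x ^ m * deriv Φ x ^ (n + 2)) -
        (n + 1) * σ * (Φ x ^ (m + 2) * deriv Φ x ^ n)) x := by
    intro x hx
    have h := ((hΦd x).hasDerivAt.fun_pow (m + 1)).fun_mul
      ((hΦ.differentiable_deriv_two x).hasDerivAt.fun_pow (n + 1))
    refine h.congr_deriv ?_
    rw [heig x (uIcc_of_le hab ▸ hx)]
    push_cast
    ring
  have hint : ∀ k l : ℕ, IntervalIntegrable (fun x => Φ x ^ k * deriv Φ x ^ l) volume a b :=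
    fun k l => ((hΦ.continuous.pow k).mul (hcΦ'.pow l)).intervalIntegrable a b
  have hzero := integral_eq_sub_of_hasDerivAt hderiv
    (((hint _ _).const_mul _).sub ((hint _ _).const_mul _))
  rw [integral_sub ((hint _ _).const_mul _) ((hint _ _).const_mul _), integral_const_mul,
    integral_const_mul, ha, hb] at hzero
  simp only [zero_pow n.succ_ne_zero, mul_zero, sub_self] at hzero
  linarith

end

/-- Identity (5.26): for a Neumann eigenfunction Φ on [0,L] with eigenvalue σ,
∫₀^L (Φ')² (Φ²)'' dx = 2σ² ∫₀^L Φ⁴ dx − 2σ ∫₀^L Φ² (Φ')² dx. -/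
theorem integral_gradsq_laplacian_phisq (L σ : ℝ) (hL : 0 < L) (Φ : ℝ → ℝ)
    (hΦ : ContDiff ℝ 2 Φ)
    (heig : ∀ x ∈ Set.Icc (0 : ℝ) L, deriv (deriv Φ) x = -σ * Φ x)
    (hbc0 : deriv Φ 0 = 0) (hbcL : deriv Φ L = 0) :
    ∫ x in (0 : ℝ)..L, (deriv Φ x) ^ 2 * deriv (deriv (fun y => (Φ y) ^ 2)) x =
      2 * σ ^ 2 * (∫ x in (0 : ℝ)..L, (Φ x) ^ 4) -
        2 * σ * ∫ x in (0 : ℝ)..L, (Φ x) ^ 2 * (deriv Φ x) ^ 2 := by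
  have hcΦ' : Continuous (deriv Φ) := hΦ.continuous_deriv one_le_two
  have hquartic := integral_pow_mul_deriv_pow_of_neumann hΦ hL.le heig hbc0 hbcL 0 2
  have hmixed := integral_pow_mul_deriv_pow_of_neumann hΦ hL.le heig hbc0 hbcL 2 0
  norm_num at hquartic hmixed
  calc ∫ x in (0 : ℝ)..L, deriv Φ x ^ 2 * deriv (deriv fun y => Φ y ^ 2) x
      = ∫ x in (0 : ℝ)..L, (2 * deriv Φ x ^ 4 - 2 * σ * (Φ x ^ 2 * deriv Φ x ^ 2)) := by
        refine integral_congr fun x hx => ?_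
        rw [deriv_deriv_sq (hΦ.differentiable two_ne_zero) (hΦ.differentiable_deriv_two x),
          heig x (uIcc_of_le hL.le ▸ hx)]
        ring
    _ = 2 * (∫ x in (0 : ℝ)..L, deriv Φ x ^ 4) -
          2 * σ * ∫ x in (0 : ℝ)..L, Φ x ^ 2 * deriv Φ x ^ 2 := by
        rw [integral_sub, integral_const_mul, integral_const_mul]
        · exact ((hcΦ'.pow 4).intervalIntegrable _ _).const_mul _
        · exact (((hΦ.continuous.pow 2).mul (hcΦ'.pow 2)).intervalIntegrable _ _).const_mul _
    _ = _ := by linear_combination 2 * hquartic + 2 * σ * hmixed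
end

section
/- Let σ > 0, set a = 2B̄F₂/F₁ + ρ̄ − 1, assume aσ − λ₀Ā > 0, and set ε̄ = (aσ − λ₀Ā)/(c(σ + λ₀Ā)σ). Let M₄ be the 4×4 real matrix with rows r₁ = (ρ̄ − 1 − 2cε̄σ, Ā, 2cε̄σ², 0), r₂ = (λ₀ρ̄ − (4ρ̄F₂/F₁)σ, λ₀Ā + 2σ, (4ρ̄F₂/F₁)σ², −2σ²), r₃ = (2cε̄, 0, ρ̄ − 1 − 2cε̄σ, Ā), r₄ = (4ρ̄F₂/F₁, −2, λ₀ρ̄ − (4ρ̄F₂/F₁)σ, λ₀Ā + 2σ). Then det M₄ = −λ₀Ā · det of the 2×2 matrix with first row (ρ̄ − 1 − 4cε̄σ, Ā) and second row (λ₀ρ̄ − (8ρ̄F₂/F₁)σ, λ₀Ā + 4σ), and this equals (3λ₀Ā/(σ + λ₀Ā))·(4aσ² − 5λ₀Āσ − λ₀²Ā²); consequently M₄ is invertible if and only if a ≠ λ₀Ā(λ₀Ā + 5σ)/(4σ²). -/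
set_option maxHeartbeats 4000000 in
/-- The 4×4 determinant factors identically (block structure
`[[X, σ²Z], [Z, X]]` gives `det = det(X+σZ)·det(X−σZ)` and `det(X+σZ) = −λ₀Ā`). -/
private lemma det_M4_aux (ρ A lam s e g : ℝ) :
    (!![ρ - 1 - 2 * e * s, A, 2 * e * s ^ 2, 0;
        lam * ρ - g * s, lam * A + 2 * s, g * s ^ 2, -2 * s ^ 2;
        2 * e, 0, ρ - 1 - 2 * e * s, A;
        g, -2, lam * ρ - g * s, lam * A + 2 * s]).det =
      -(lam * A) *
        (!![ρ - 1 - 4 * e * s, A;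
            lam * ρ - 2 * g * s, lam * A + 4 * s]).det := by
  simp [Matrix.det_succ_row_zero, Fin.sum_univ_succ, Matrix.det_fin_two_of,
    show (1 : Fin 4).succAbove 2 = 3 from rfl, show (2 : Fin 4).succAbove 2 = 3 from rfl,
    show (3 : Fin 4).succAbove 2 = 2 from rfl, show (0 : Fin 4).succAbove 2 = 3 from rfl]
  ring

set_option maxHeartbeats 2000000 in
/-- Determinant identity for the 4×4 coefficient matrix of the linear system
(5.29) determining K₂, and its solvability condition. -/
theorem det_M4_identity
    (A0 Bbar lam0 h1 h2 F1 F2 Abar ρbar c a σ εbar : ℝ)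
    (M₄ : Matrix (Fin 4) (Fin 4) ℝ)
    (hA0 : 0 < A0) (hB : 0 < Bbar) (hlam : 0 < lam0)
    (hh1 : 0 < h1) (hh2 : 0 < h2) (hF1 : 0 < F1) (hF2 : 0 < F2)
    (hAbar : Abar = A0 + Bbar) (hρbar : ρbar = Bbar / (A0 + Bbar))
    (hc : c = h1 + h2 * Bbar)
    (hσ : 0 < σ)
    (ha : a = 2 * Bbar * F2 / F1 + ρbar - 1)
    (hnum : 0 < a * σ - lam0 * Abar)
    (hεbar : εbar = (a * σ - lam0 * Abar) / (c * (σ + lam0 * Abar) * σ))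
    (hM : M₄ =
      !![ρbar - 1 - 2 * c * εbar * σ, Abar, 2 * c * εbar * σ ^ 2, 0;
         lam0 * ρbar - (4 * ρbar * F2 / F1) * σ, lam0 * Abar + 2 * σ,
           (4 * ρbar * F2 / F1) * σ ^ 2, -2 * σ ^ 2;
         2 * c * εbar, 0, ρbar - 1 - 2 * c * εbar * σ, Abar;
         4 * ρbar * F2 / F1, -2, lam0 * ρbar - (4 * ρbar * F2 / F1) * σ,
           lam0 * Abar + 2 * σ]) :
    M₄.det =
        -(lam0 * Abar) *
          (!![ρbar - 1 - 4 * c * εbar * σ, Abar;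
              lam0 * ρbar - (8 * ρbar * F2 / F1) * σ, lam0 * Abar + 4 * σ]).det ∧
      M₄.det =
        (3 * lam0 * Abar / (σ + lam0 * Abar)) *
          (4 * a * σ ^ 2 - 5 * lam0 * Abar * σ - lam0 ^ 2 * Abar ^ 2) ∧
      (IsUnit M₄ ↔ a ≠ lam0 * Abar * (lam0 * Abar + 5 * σ) / (4 * σ ^ 2)) := by
  have hc0 : 0 < c := by rw [hc]; positivity
  have hAb : 0 < Abar := by rw [hAbar]; positivity
  have hS : 0 < σ + lam0 * Abar := by positivity
  have hSne : σ + lam0 * Abar ≠ 0 := ne_of_gt hS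
  have hσne : σ ≠ 0 := ne_of_gt hσ
  have hcne : c ≠ 0 := ne_of_gt hc0
  have hF1ne : F1 ≠ 0 := ne_of_gt hF1
  have hABne : A0 + Bbar ≠ 0 := by positivity
  have hAne : Abar ≠ 0 := ne_of_gt hAb
  have hd1 : M₄.det =
      -(lam0 * Abar) *
        (!![ρbar - 1 - 4 * c * εbar * σ, Abar;
            lam0 * ρbar - (8 * ρbar * F2 / F1) * σ, lam0 * Abar + 4 * σ]).det := by
    rw [hM]
    have := det_M4_aux ρbar Abar lam0 σ (c * εbar) (4 * ρbar * F2 / F1)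
    convert this using 3 <;> ring_nf
  have hd2 : M₄.det =
      (3 * lam0 * Abar / (σ + lam0 * Abar)) *
        (4 * a * σ ^ 2 - 5 * lam0 * Abar * σ - lam0 ^ 2 * Abar ^ 2) := by
    rw [hd1, Matrix.det_fin_two_of, hεbar]
    have hg8 : 8 * ρbar * F2 / F1 = 4 * (a + 1 - ρbar) / Abar := by
      rw [ha, hρbar, hAbar]; field_simp; ring
    rw [hg8, hρbar, hAbar]
    field_simp
    ring
  refine ⟨hd1, hd2, ?_⟩
  rw [Matrix.isUnit_iff_isUnit_det, isUnit_iff_ne_zero, hd2]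
  have hK : 3 * lam0 * Abar / (σ + lam0 * Abar) ≠ 0 := by positivity
  rw [mul_ne_zero_iff]
  constructor
  · rintro ⟨-, h⟩ heq
    apply h
    rw [heq]
    field_simp
    ring
  · intro h
    refine ⟨hK, fun h0 => h ?_⟩
    rw [eq_div_iff (by positivity)]
    linear_combination h0
end
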